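/- If a sequence π of distinct keys avoids the pattern (3,1,2) (i.e., there are no indices i < j < k with π_j < π_k < π_i), then in the insertion tree BST(π) no node that is a left child of its parent has a right child. (Equivalently, BST(π) is a left-toothed comb: the access path of every node consists of some number j ≥ 0 of right-child edges followed by some number k ≥ 0 of left-child edges.) -/

import Mathlib

/-- Binary trees with keys at internal nodes. -/
inductive BT (α : Type) where
  | leaf : BT α
  | node : BT α → α → BT α → BT α
deriving DecidableEq

namespace BT

variable {α : Type} [LinearOrder α]

/-- The list of keys of a tree, in symmetric (inorder) order. -/
def keys : BT α → List α
  | leaf => []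
  | node l v r => keys l ++ v :: keys r

/-- The number of nodes of a tree. -/
def size : BT α → ℕ
  | leaf => 0
  | node l _ r => size l + size r + 1

/-- The symmetric-order (binary search tree) property. -/
def IsBST : BT α → Prop
  | leaf => True
  | node l v r => (∀ x ∈ l.keys, x < v) ∧ (∀ x ∈ r.keys, v < x) ∧ l.IsBST ∧ r.IsBST

/-- Preorder of a binary tree: root, then left subtree, then right subtree. -/
def preorder : BT α → List α
  | leaf => []
  | node l v r => v :: (preorder l ++ preorder r)

/-- Postorder of a binary tree: left subtree, right subtree, then root. -/
def postorder : BT α → List α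
  | leaf => []
  | node l v r => postorder l ++ postorder r ++ [v]

/-- Reversed preorder: root, then right subtree, then left subtree
(the preorder of the mirror image). -/
def revPreorder : BT α → List α
  | leaf => []
  | node l v r => v :: (revPreorder r ++ revPreorder l)

/-- Standard leaf insertion into a binary search tree. -/
def insertKey : BT α → α → BT α
  | leaf, x => node leaf x leaf
  | node l v r, x =>
    if x < v then node (insertKey l x) v r
    else if v < x then node l v (insertKey r x)
    else node l v r

/-- The depth (number of edges from the root) of the node with key `x`,
located by binary search. -/
def depthOf : BT α → α → ℕ
  | leaf, _ => 0
  | node l v r, x =>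
    if x < v then depthOf l x + 1
    else if v < x then depthOf r x + 1
    else 0

/-- The search path to the key `x`: `false` records a step to a left child,
`true` a step to a right child. -/
def pathTo : BT α → α → List Bool
  | leaf, _ => []
  | node l v r, x =>
    if x < v then false :: pathTo l x
    else if v < x then true :: pathTo r x
    else []

/-- The left-depth of the node with key `x`: the number of left-child edges
on the path from the root to it. -/
def leftDepthKey : BT α → α → ℕ
  | leaf, _ => 0
  | node l v r, x =>
    if x < v then leftDepthKey l x + 1
    else if v < x then leftDepthKey r x
    else 0

/-- The subtree rooted at the node with key `x` (empty if `x` is absent). -/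
def subtreeAt : BT α → α → BT α
  | leaf, _ => leaf
  | node l v r, x =>
    if x < v then subtreeAt l x
    else if v < x then subtreeAt r x
    else node l v r

/-- The key at the root, if any. -/
def rootKey : BT α → Option α
  | leaf => none
  | node _ v _ => some v

/-- The key of the parent of the node with key `x`, if any. -/
def parentKey : BT α → α → Option α
  | leaf, _ => none
  | node l v r, x =>
    if x < v then (if l.rootKey = some x then some v else l.parentKey x)
    else if v < x then (if r.rootKey = some x then some v else r.parentKey x)
    else none

/-- A step of the context (zipper) describing the search path from the root
to the current subtree: `inL v r` means the current subtree is the left child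
of a node with key `v` and right subtree `r`; `inR l v` means it is the right
child of a node with key `v` and left subtree `l`. -/
inductive Ctx (α : Type) where
  | inL : α → BT α → Ctx α
  | inR : BT α → α → Ctx α

/-- Descend along the search path for `x`, recording the context.
The head of the returned list corresponds to the immediate parent. -/
def descend : BT α → α → List (Ctx α) → List (Ctx α) × BT α
  | leaf, _, acc => (acc, leaf)
  | node l v r, x, acc =>
    if x < v then descend l x (Ctx.inL v r :: acc)
    else if v < x then descend r x (Ctx.inR l v :: acc)
    else (acc, node l v r)

/-- Reattach a subtree into its context, with no rotations. -/
def rebuild : BT α → List (Ctx α) → BT α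
  | t, [] => t
  | t, Ctx.inL v r :: cs => rebuild (node t v r) cs
  | t, Ctx.inR l v :: cs => rebuild (node l v t) cs

/-- Bottom-up splay steps: repeatedly apply zig / zig-zig / zig-zag steps to
the current subtree (rooted at the node being splayed) until the context is
exhausted. -/
def splayLoop : BT α → List (Ctx α) → BT α
  | t, [] => t
  | node a x b, [Ctx.inL v r] => node a x (node b v r)          -- zig
  | node a x b, [Ctx.inR l v] => node (node l v a) x b          -- zig
  | node a x b, Ctx.inL p pr :: Ctx.inL g gr :: cs =>           -- zig-zig
      splayLoop (node a x (node b p (node pr g gr))) cs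
  | node a x b, Ctx.inL p pr :: Ctx.inR gl g :: cs =>           -- zig-zag
      splayLoop (node (node gl g a) x (node b p pr)) cs
  | node a x b, Ctx.inR pl p :: Ctx.inR gl g :: cs =>           -- zig-zig
      splayLoop (node (node (node gl g pl) p a) x b) cs
  | node a x b, Ctx.inR pl p :: Ctx.inL g gr :: cs =>           -- zig-zag
      splayLoop (node (node pl p a) x (node b g gr)) cs
  | leaf, cs => rebuild leaf cs   -- unreachable when the splayed key is present

/-- Splaying the key `x`: if `x` occurs in the tree, bring its node to the
root by bottom-up splay steps; otherwise leave the tree unchanged. -/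
def splay (x : α) (t : BT α) : BT α :=
  match descend t x [] with
  | (_, leaf) => t
  | (cs, found) => splayLoop found cs

/-- `α`-weight-balance in the sense of Nievergelt–Reingold:
at each node, `min(|L|,|R|) + 1 ≥ α * (|x| + 1)`. -/
def WeightBalanced (a : ℝ) : BT α → Prop
  | leaf => True
  | node l _ r =>
      (min l.size r.size + 1 : ℝ) ≥ a * ((l.size + r.size + 1 : ℕ) + 1 : ℝ) ∧
      WeightBalanced a l ∧ WeightBalanced a r

/-- The rank of `x` in `t`: the number of keys of `t` that are `≤ x`. -/
def rank (t : BT α) (x : α) : ℕ := (t.keys.filter (fun y => y ≤ x)).length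

end BT

section Defs

variable {α : Type} [LinearOrder α]

/-- The insertion tree of a sequence: leaf-insert the keys in order. -/
def bstOf (π : List α) : BT α := π.foldl BT.insertKey BT.leaf

/-- `q` is a sub-root: a node of `t` not yet touched whose parent is touched,
where `touched` is the list of touched keys. -/
def IsSubRoot (t : BT α) (touched : List α) (q : α) : Prop :=
  q ∈ t.keys ∧ q ∉ touched ∧ ∃ p, t.parentKey q = some p ∧ p ∈ touched

/-- π avoids the pattern (2,3,1). -/
def Avoids231 (π : List α) : Prop :=
  ¬ ∃ i j k : Fin π.length, i < j ∧ j < k ∧ π.get k < π.get i ∧ π.get i < π.get j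

/-- π avoids the pattern (3,1,2). -/
def Avoids312 (π : List α) : Prop :=
  ¬ ∃ i j k : Fin π.length, i < j ∧ j < k ∧ π.get j < π.get k ∧ π.get k < π.get i

/-- π avoids the pattern (2,1,3). -/
def Avoids213 (π : List α) : Prop :=
  ¬ ∃ i j k : Fin π.length, i < j ∧ j < k ∧ π.get j < π.get i ∧ π.get i < π.get k

/-- π contains a strictly decreasing subsequence of length `k`. -/
def HasDecreasingSubseq (π : List α) (k : ℕ) : Prop :=
  ∃ s : List α, s.Sublist π ∧ s.length = k ∧ s.Chain' (· > ·)

/-- Splay the keys of a list in order, starting from `t`. -/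
def splaySeq (π : List α) (t : BT α) : BT α := π.foldl (fun s x => BT.splay x s) t

/-- The cost of splaying a sequence of keys starting from `t`:
each splay costs the current depth of the requested key plus one. -/
def splayCost : BT α → List α → ℕ
  | _, [] => 0
  | t, x :: xs => (t.depthOf x + 1) + splayCost (BT.splay x t) xs

/-- The cost of insertion splaying a sequence of keys starting from `t`:
each key is leaf-inserted, then the new node is splayed, at a cost of
its depth after insertion plus one. -/
def insertSplayCost : BT α → List α → ℕ
  | _, [] => 0
  | t, x :: xs =>
    ((t.insertKey x).depthOf x + 1) + insertSplayCost (BT.splay x (t.insertKey x)) xs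

/-- `DF rk xs` = Σ_{i≥2} log₂(|rk(x_i) − rk(x_{i−1})| + 1). -/
noncomputable def DF (rk : α → ℕ) (xs : List α) : ℝ :=
  ((xs.zip xs.tail).map
    (fun p => Real.logb 2 (|(rk p.2 : ℝ) - (rk p.1 : ℝ)| + 1))).sum

/-- The rank of `x` within the sequence `σ` itself. -/
def rankIn (σ : List α) (x : α) : ℕ := (σ.filter (fun y => y ≤ x)).length

/-- The dynamic-finger sum of a sequence, with ranks computed in the
sequence itself. -/
noncomputable def DFseq (σ : List α) : ℝ := DF (rankIn σ) σ

end Defs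

/-- In a (left-toothed) comb, every left child has no right child. -/
def BT.rightIsLeaf {α : Type} : BT α → Prop
  | BT.leaf => True
  | BT.node _ _ r => r = BT.leaf

/-- `IsComb t` says that no node of `t` that is a left child of its parent
has a right child; equivalently, every access path consists of some number of
right-child edges followed by some number of left-child edges. -/
def BT.IsComb {α : Type} : BT α → Prop
  | BT.leaf => True
  | BT.node l _ r => BT.rightIsLeaf l ∧ BT.IsComb l ∧ BT.IsComb r

/-!
The insertion tree of `x :: xs` has root `x`, left subtree the insertion tree of the keys
`< x` and right subtree that of the keys `> x`, in their order in `xs`; both subsequences still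
avoid 312. If `y` is the first key `< x`, the right child of `y` is built from the later keys `z`
with `y < z < x`, and each such `z` would complete a pattern `x, y, z` of shape 312.
-/

section InsertionTree

variable {α : Type} [LinearOrder α]

theorem BT.foldl_insertKey_node (xs : List α) (l r : BT α) (x : α) :
    xs.foldl insertKey (node l x r) =
      node ((xs.filter (· < x)).foldl insertKey l) x ((xs.filter (x < ·)).foldl insertKey r) := by
  induction xs generalizing l r with
  | nil => rfl
  | cons y ys ih =>
    rcases lt_trichotomy y x with hyx | rfl | hxy
    · simp [insertKey, hyx, ih, not_lt_of_gt hyx]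
    · simp [insertKey, ih]
    · simp [insertKey, hxy, ih, not_lt_of_gt hxy]

theorem bstOf_cons (x : α) (xs : List α) :
    bstOf (x :: xs) = .node (bstOf (xs.filter (· < x))) x (bstOf (xs.filter (x < ·))) :=
  BT.foldl_insertKey_node xs .leaf .leaf x

theorem Avoids312.sublist {π σ : List α} (h : Avoids312 π) (hσ : σ.Sublist π) : Avoids312 σ := by
  rintro ⟨i, j, k, hij, hjk, hjk', hki⟩
  obtain ⟨f, hf⟩ := List.sublist_iff_exists_fin_orderEmbedding_get_eq.mp hσ
  exact h ⟨f i, f j, f k, f.strictMono hij, f.strictMono hjk,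
    by simpa only [hf] using hjk', by simpa only [hf] using hki⟩

theorem Avoids312.not_lt_lt {π : List α} {a b c : α} (h : Avoids312 π)
    (habc : [a, b, c].Sublist π) : ¬(b < c ∧ c < a) := fun ⟨hbc, hca⟩ =>
  h.sublist habc ⟨⟨0, by simp⟩, ⟨1, by simp⟩, ⟨2, by simp⟩, Fin.mk_lt_mk.mpr zero_lt_one,
    Fin.mk_lt_mk.mpr one_lt_two, hbc, hca⟩

theorem rightIsLeaf_bstOf_cons {y : α} {ys : List α} (h : ∀ z ∈ ys, ¬y < z) :
    (bstOf (y :: ys)).rightIsLeaf := by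
  have hright : ys.filter (y < ·) = [] :=
    List.filter_eq_nil_iff.mpr fun z hz => by simpa using h z hz
  rw [bstOf_cons, hright]
  exact rfl

theorem Avoids312.rightIsLeaf_bstOf_filter_lt {x : α} {xs : List α} (h : Avoids312 (x :: xs)) :
    (bstOf (xs.filter (· < x))).rightIsLeaf := by
  rcases hfilter : xs.filter (· < x) with _ | ⟨y, ys⟩
  · trivial
  have hys : (y :: ys).Sublist xs := hfilter ▸ List.filter_sublist
  refine rightIsLeaf_bstOf_cons fun z hz hyz => h.not_lt_lt (a := x) ?_ ⟨hyz, ?_⟩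
  · exact ((List.singleton_sublist.mpr hz).cons_cons y |>.trans hys).cons_cons x
  · have hz' : z ∈ xs.filter (· < x) := hfilter ▸ List.mem_cons_of_mem y hz
    simpa using (List.mem_filter.mp hz').2

end InsertionTree

theorem insertionTree_comb_of_avoids312_general {α : Type} [LinearOrder α]
    (π : List α) (hav : Avoids312 π) :
    BT.IsComb (bstOf π) := by
  induction hlen : π.length using Nat.strong_induction_on generalizing π with
  | _ n ih =>
    rcases π with _ | ⟨x, xs⟩
    · trivial
    have hchild (p : α → Bool) : (bstOf (xs.filter p)).IsComb :=
      ih _ (hlen ▸ Nat.lt_succ_of_le (List.length_filter_le p xs)) _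
        (hav.sublist (List.filter_sublist.cons x)) rfl
    rw [bstOf_cons]
    exact ⟨hav.rightIsLeaf_bstOf_filter_lt, hchild _, hchild _⟩

/-- The insertion tree of a (3,1,2)-avoiding sequence of distinct keys is a
left-toothed comb: no left child has a right child. -/
theorem insertionTree_comb_of_avoids312 {α : Type} [LinearOrder α]
    (π : List α) (hnd : π.Nodup) (hav : Avoids312 π) :
    BT.IsComb (bstOf π) :=
  insertionTree_comb_of_avoids312_general π hav
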